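/- arXiv:2602.07492 — 5 statements merged into one kernel-verified Lean document; each statement's English description precedes it below -/
import Mathlib

section
/- The sum over integers k with k ≠ 0 and k ≠ a of 1/(|k-a|^(1/2+ε) · |k|^(1/2)) is finite, with a bound uniform in a ∈ ℤ \ {0}, for any ε > 0. -/
open scoped BigOperators
set_option maxHeartbeats 1000000

lemma stmt0_key {x y ε : ℝ} (hε : 0 < ε) (hx : 1 ≤ x) (hy : 1 ≤ y) :
    x ^ (-(1/2 + ε)) * y ^ (-(1/2) : ℝ) ≤ y ^ (-(1 + ε)) + x ^ (-(1 + ε)) := by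
  have hx0 : 0 < x := lt_of_lt_of_le one_pos hx
  have hy0 : 0 < y := lt_of_lt_of_le one_pos hy
  rcases le_total x y with h | h
  · -- x ≤ y : y^(-1/2) ≤ x^(-1/2)
    have h1 : y ^ (-(1/2) : ℝ) ≤ x ^ (-(1/2) : ℝ) :=
      Real.rpow_le_rpow_of_nonpos hx0 h (by norm_num)
    have h2 : x ^ (-(1/2 + ε)) * y ^ (-(1/2) : ℝ) ≤ x ^ (-(1/2 + ε)) * x ^ (-(1/2) : ℝ) :=
      mul_le_mul_of_nonneg_left h1 (Real.rpow_nonneg hx0.le _)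
    have h3 : x ^ (-(1/2 + ε)) * x ^ (-(1/2) : ℝ) = x ^ (-(1 + ε)) := by
      rw [← Real.rpow_add hx0]; ring_nf
    calc x ^ (-(1/2 + ε)) * y ^ (-(1/2) : ℝ) ≤ x ^ (-(1 + ε)) := by rw [← h3]; exact h2
    _ ≤ y ^ (-(1 + ε)) + x ^ (-(1 + ε)) := le_add_of_nonneg_left (Real.rpow_nonneg hy0.le _)
  · -- y ≤ x
    have h1 : x ^ (-(1/2 + ε)) ≤ y ^ (-(1/2 + ε)) :=
      Real.rpow_le_rpow_of_nonpos hy0 h (by linarith)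
    have h2 : x ^ (-(1/2 + ε)) * y ^ (-(1/2) : ℝ) ≤ y ^ (-(1/2 + ε)) * y ^ (-(1/2) : ℝ) :=
      mul_le_mul_of_nonneg_right h1 (Real.rpow_nonneg hy0.le _)
    have h3 : y ^ (-(1/2 + ε)) * y ^ (-(1/2) : ℝ) = y ^ (-(1 + ε)) := by
      rw [← Real.rpow_add hy0]; ring_nf
    calc x ^ (-(1/2 + ε)) * y ^ (-(1/2) : ℝ) ≤ y ^ (-(1 + ε)) := by rw [← h3]; exact h2
    _ ≤ y ^ (-(1 + ε)) + x ^ (-(1 + ε)) := le_add_of_nonneg_right (Real.rpow_nonneg hx0.le _)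

/-- Uniform summability of ∑_{k ≠ 0, a} |k-a|^{-(1/2+ε)} |k|^{-1/2} over nonzero a. -/
theorem stmt_0 (ε : ℝ) (hε : 0 < ε) :
    ∃ C : ℝ, ∀ a : ℤ, a ≠ 0 →
      Summable (fun k : ℤ =>
        if k = 0 ∨ k = a then 0
        else |(k : ℝ) - (a : ℝ)| ^ (-(1/2 + ε)) * |(k : ℝ)| ^ (-(1/2) : ℝ)) ∧
      (∑' k : ℤ,
        if k = 0 ∨ k = a then 0
        else |(k : ℝ) - (a : ℝ)| ^ (-(1/2 + ε)) * |(k : ℝ)| ^ (-(1/2) : ℝ)) ≤ C := by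
  set g : ℤ → ℝ := fun k => |(k : ℝ)| ^ (-(1 + ε)) with hg
  have hgsum : Summable g := Real.summable_abs_int_rpow (by linarith)
  refine ⟨2 * ∑' k, g k, fun a ha => ?_⟩
  have hshift : Summable (fun k : ℤ => g (k - a)) :=
    (Equiv.subRight a).summable_iff.mpr hgsum
  set f : ℤ → ℝ := fun k =>
    if k = 0 ∨ k = a then 0
    else |(k : ℝ) - (a : ℝ)| ^ (-(1/2 + ε)) * |(k : ℝ)| ^ (-(1/2) : ℝ) with hf
  have hnonneg : ∀ k, 0 ≤ f k := by
    intro k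
    simp only [hf]
    split
    · exact le_refl 0
    · positivity
  have hbd : ∀ k : ℤ, f k ≤ g k + g (k - a) := by
    intro k
    have h1 : (0:ℝ) ≤ g k := Real.rpow_nonneg (abs_nonneg _) _
    have h2 : (0:ℝ) ≤ g (k - a) := Real.rpow_nonneg (abs_nonneg _) _
    by_cases hk : k = 0 ∨ k = a
    · simp only [hf, if_pos hk]; linarith
    · push_neg at hk
      simp only [hf, if_neg (not_or.mpr hk)]
      have hk1 : (1:ℝ) ≤ |(k : ℝ)| := by
        have := Int.one_le_abs (by exact hk.1)
        calc (1:ℝ) ≤ ((|k| : ℤ) : ℝ) := by exact_mod_cast this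
        _ = |(k : ℝ)| := by push_cast; ring
      have hka1 : (1:ℝ) ≤ |(k : ℝ) - (a : ℝ)| := by
        have hne : k - a ≠ 0 := sub_ne_zero.mpr hk.2
        have := Int.one_le_abs hne
        calc (1:ℝ) ≤ ((|k - a| : ℤ) : ℝ) := by exact_mod_cast this
        _ = |(k : ℝ) - (a : ℝ)| := by push_cast; ring
      have key := stmt0_key hε hka1 hk1
      have hgk : g k = |(k : ℝ)| ^ (-(1 + ε)) := rfl
      have hgka : g (k - a) = |(k : ℝ) - (a : ℝ)| ^ (-(1 + ε)) := by
        simp only [hg]; push_cast; ring_nf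
      rw [hgk, hgka]
      linarith
  have hsumF : Summable f := Summable.of_nonneg_of_le hnonneg hbd (hgsum.add hshift)
  refine ⟨hsumF, ?_⟩
  have h1 : ∑' k, f k ≤ ∑' k, (g k + g (k - a)) :=
    Summable.tsum_le_tsum hbd hsumF (hgsum.add hshift)
  have h2 : ∑' k, (g k + g (k - a)) = (∑' k, g k) + ∑' k, g (k - a) :=
    Summable.tsum_add hgsum hshift
  have h3 : ∑' k : ℤ, g (k - a) = ∑' k, g k := (Equiv.subRight a).tsum_eq g
  calc ∑' k, f k ≤ (∑' k, g k) + ∑' k, g (k - a) := by rw [← h2]; exact h1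
  _ = 2 * ∑' k, g k := by rw [h3]; ring
end

section
/- For all a, b > 0 and t > 0 with a ≠ b, the identity ∫_{-∞}^{τ} ∫_{-∞}^{τ'} exp(-a|τ-r| - a|τ'-r'| - b|r-r'|) dr' dr = (a·e^{-b|τ-τ'|} - b·e^{-a|τ-τ'|}) / (a(a²-b²)) holds, and this quantity is bounded above by min(1/(a(a+b)), e^{-min(a,b)|τ-τ'|}/(a·|a-b|)). -/
open MeasureTheory Real
open Filter


lemma myCont (k : ℝ) : Continuous (fun x : ℝ => Real.exp (k*x)) :=
  Real.continuous_exp.comp (continuous_const.mul continuous_id)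

lemma myIntInt (k u v : ℝ) (hk : k ≠ 0) :
    ∫ x in u..v, Real.exp (k*x) = (Real.exp (k*v) - Real.exp (k*u))/k := by
  have hd : ∀ x ∈ Set.uIcc u v, HasDerivAt (fun x => Real.exp (k*x)/k) (Real.exp (k*x)) x := by
    intro x _
    have h1 : HasDerivAt (fun x : ℝ => k*x) k x := by
      simpa using (hasDerivAt_id x).const_mul k
    have := ((Real.hasDerivAt_exp (k*x)).comp x h1).div_const k
    simpa [mul_div_assoc, mul_div_cancel_right₀, hk] using this
  rw [intervalIntegral.integral_eq_sub_of_hasDerivAt hd ((myCont k).intervalIntegrable u v)]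
  ring

lemma myIntgOn (k c : ℝ) (hk : 0 < k) :
    IntegrableOn (fun x => Real.exp (k*x)) (Set.Iic c) := by
  refine integrableOn_Iic_of_intervalIntegral_norm_bounded (Real.exp (k*c)/k) c
    (fun y => ((myCont k).integrableOn_Ioc)) Filter.tendsto_id ?_
  filter_upwards with y
  simp_rw [Real.norm_of_nonneg (Real.exp_pos _).le, myIntInt k _ _ hk.ne']
  have h1 := (Real.exp_pos (k*(id y : ℝ))).le
  exact (div_le_div_iff_of_pos_right hk).mpr (by linarith)

lemma myTendsto (k : ℝ) (hk : 0 < k) :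
    Filter.Tendsto (fun y : ℝ => Real.exp (k*y)) atBot (nhds 0) := by
  apply Real.tendsto_exp_atBot.comp
  exact Tendsto.const_mul_atBot hk Filter.tendsto_id

lemma myIntIic (k c : ℝ) (hk : 0 < k) :
    ∫ x in Set.Iic c, Real.exp (k*x) = Real.exp (k*c)/k := by
  refine tendsto_nhds_unique
    (intervalIntegral_tendsto_integral_Iic c (myIntgOn k c hk) Filter.tendsto_id) ?_
  simp_rw [myIntInt k _ c hk.ne']
  have h := ((myTendsto k hk).const_sub (Real.exp (k*c))).div_const k
  simpa using h

lemma inner_le (a b s r : ℝ) (ha : 0 < a) (hb : 0 < b) (hab : a ≠ b) (hr : r ≤ s) :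
    ∫ r' in Set.Iic s, Real.exp (-a*|s-r'| - b*|r-r'|)
      = Real.exp (a*r - a*s)/(a+b)
        + (Real.exp (b*r - b*s) - Real.exp (a*r - a*s))/(a-b) := by
  have habne : a - b ≠ 0 := sub_ne_zero.mpr hab
  have hsplit : Set.Iic s = Set.Iic r ∪ Set.Ioc r s := (Set.Iic_union_Ioc_eq_Iic hr).symm
  have hdisj : Disjoint (Set.Iic r) (Set.Ioc r s) := by
    simp only [Set.disjoint_left, Set.mem_Iic, Set.mem_Ioc]
    intro x h1 h2
    linarith [h2.1]
  have heq1 : Set.EqOn (fun x => Real.exp (-(a*s) - b*r) * Real.exp ((a+b)*x))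
      (fun r' => Real.exp (-a*|s-r'| - b*|r-r'|)) (Set.Iic r) := by
    intro x hx
    simp only [Set.mem_Iic] at hx
    dsimp only
    rw [← Real.exp_add, abs_of_nonneg (by linarith), abs_of_nonneg (by linarith)]
    ring_nf
  have heq2 : Set.EqOn (fun x => Real.exp (-(a*s) + b*r) * Real.exp ((a-b)*x))
      (fun r' => Real.exp (-a*|s-r'| - b*|r-r'|)) (Set.Ioc r s) := by
    intro x hx
    simp only [Set.mem_Ioc] at hx
    dsimp only
    rw [← Real.exp_add, abs_of_nonneg (by linarith [hx.2]), abs_of_nonpos (by linarith [hx.1])]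
    ring_nf
  have h1 : IntegrableOn (fun r' => Real.exp (-a*|s-r'| - b*|r-r'|)) (Set.Iic r) :=
    IntegrableOn.congr_fun ((myIntgOn (a+b) r (by linarith)).const_mul _) heq1 measurableSet_Iic
  have h2 : IntegrableOn (fun r' => Real.exp (-a*|s-r'| - b*|r-r'|)) (Set.Ioc r s) := by
    apply Continuous.integrableOn_Ioc
    fun_prop
  rw [hsplit, setIntegral_union hdisj measurableSet_Ioc h1 h2]
  have e1 : ∫ r' in Set.Iic r, Real.exp (-a*|s-r'| - b*|r-r'|)
      = Real.exp (-(a*s) - b*r) * (Real.exp ((a+b)*r)/(a+b)) := by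
    rw [← setIntegral_congr_fun measurableSet_Iic heq1, integral_const_mul,
      myIntIic (a+b) r (by linarith)]
  have e2 : ∫ r' in Set.Ioc r s, Real.exp (-a*|s-r'| - b*|r-r'|)
      = Real.exp (-(a*s) + b*r) * ((Real.exp ((a-b)*s) - Real.exp ((a-b)*r))/(a-b)) := by
    rw [← setIntegral_congr_fun measurableSet_Ioc heq2, integral_const_mul,
      ← intervalIntegral.integral_of_le hr, myIntInt (a-b) r s habne]
  rw [e1, e2]
  ring_nf
  simp only [← Real.exp_add]
  ring_nf

lemma inner_ge (a b s r : ℝ) (ha : 0 < a) (hb : 0 < b) (hr : s ≤ r) :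
    ∫ r' in Set.Iic s, Real.exp (-a*|s-r'| - b*|r-r'|)
      = Real.exp (b*s - b*r)/(a+b) := by
  have heq : Set.EqOn (fun x => Real.exp (-(a*s) - b*r) * Real.exp ((a+b)*x))
      (fun r' => Real.exp (-a*|s-r'| - b*|r-r'|)) (Set.Iic s) := by
    intro x hx
    simp only [Set.mem_Iic] at hx
    dsimp only
    rw [← Real.exp_add, abs_of_nonneg (by linarith), abs_of_nonneg (by linarith)]
    ring_nf
  rw [← setIntegral_congr_fun measurableSet_Iic heq, integral_const_mul,
    myIntIic (a+b) s (by linarith), ← mul_div_assoc, ← Real.exp_add]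
  ring_nf

lemma eval_le (a b τ τ' : ℝ) (ha : 0 < a) (hb : 0 < b) (hab : a ≠ b) (h : τ ≤ τ') :
    (∫ r in Set.Iic τ, ∫ r' in Set.Iic τ',
        Real.exp (-a * |τ - r| - a * |τ' - r'| - b * |r - r'|))
      = (a * Real.exp (-b * |τ - τ'|) - b * Real.exp (-a * |τ - τ'|)) / (a * (a ^ 2 - b ^ 2)) := by
  have h1 : a + b ≠ 0 := by positivity
  have h2 : a - b ≠ 0 := sub_ne_zero.mpr hab
  have ha' : a ≠ 0 := ha.ne'
  have key : Set.EqOn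
      (fun r => (1/(a+b) - 1/(a-b)) * Real.exp (2*a*r - a*τ - a*τ')
        + (1/(a-b)) * Real.exp ((a+b)*r - a*τ - b*τ'))
      (fun r => ∫ r' in Set.Iic τ', Real.exp (-a * |τ - r| - a * |τ' - r'| - b * |r - r'|))
      (Set.Iic τ) := by
    intro r hr
    simp only [Set.mem_Iic] at hr
    dsimp only
    have step : ∀ r' : ℝ, Real.exp (-a * |τ - r| - a * |τ' - r'| - b * |r - r'|)
        = Real.exp (-a*|τ-r|) * Real.exp (-a*|τ'-r'| - b*|r-r'|) := fun r' => by
      rw [← Real.exp_add]; ring_nf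
    simp only [step]
    rw [integral_const_mul, inner_le a b τ' r ha hb hab (le_trans hr h),
      abs_of_nonneg (by linarith : (0:ℝ) ≤ τ - r)]
    simp only [mul_sub, mul_add, ← mul_div_assoc, ← Real.exp_add]
    ring_nf
  rw [← setIntegral_congr_fun measurableSet_Iic key]
  have e1 : ∀ r : ℝ, Real.exp (2*a*r - a*τ - a*τ')
      = Real.exp (-(a*τ) - a*τ') * Real.exp ((2*a)*r) := fun r => by
    rw [← Real.exp_add]; ring_nf
  have e2 : ∀ r : ℝ, Real.exp ((a+b)*r - a*τ - b*τ')
      = Real.exp (-(a*τ) - b*τ') * Real.exp ((a+b)*r) := fun r => by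
    rw [← Real.exp_add]; ring_nf
  simp only [e1, e2]
  rw [integral_add ((((myIntgOn (2*a) τ (by linarith)).const_mul _).const_mul _))
      ((((myIntgOn (a+b) τ (by linarith)).const_mul _).const_mul _)),
    integral_const_mul, integral_const_mul, integral_const_mul, integral_const_mul,
    myIntIic (2*a) τ (by linarith), myIntIic (a+b) τ (by linarith),
    abs_of_nonpos (by linarith : τ - τ' ≤ 0),
    show Real.exp (-(a*τ) - a*τ') * (Real.exp (2*a*τ)/(2*a))
      = Real.exp (a*τ - a*τ')/(2*a) from by rw [← mul_div_assoc, ← Real.exp_add]; ring_nf,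
    show Real.exp (-(a*τ) - b*τ') * (Real.exp ((a+b)*τ)/(a+b))
      = Real.exp (b*τ - b*τ')/(a+b) from by rw [← mul_div_assoc, ← Real.exp_add]; ring_nf]
  have h3 : a^2 - b^2 ≠ 0 := by
    have := mul_ne_zero h2 h1
    rwa [show (a-b)*(a+b) = a^2-b^2 by ring] at this
  field_simp
  ring

lemma eval_ge (a b τ τ' : ℝ) (ha : 0 < a) (hb : 0 < b) (hab : a ≠ b) (h : τ' ≤ τ) :
    (∫ r in Set.Iic τ, ∫ r' in Set.Iic τ',
        Real.exp (-a * |τ - r| - a * |τ' - r'| - b * |r - r'|))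
      = (a * Real.exp (-b * |τ - τ'|) - b * Real.exp (-a * |τ - τ'|)) / (a * (a ^ 2 - b ^ 2)) := by
  have h1 : a + b ≠ 0 := by positivity
  have h2 : a - b ≠ 0 := sub_ne_zero.mpr hab
  have ha' : a ≠ 0 := ha.ne'
  have h3 : a^2 - b^2 ≠ 0 := by
    have := mul_ne_zero h2 h1
    rwa [show (a-b)*(a+b) = a^2-b^2 by ring] at this
  set f : ℝ → ℝ := fun r => ∫ r' in Set.Iic τ', Real.exp (-a * |τ - r| - a * |τ' - r'| - b * |r - r'|) with hf
  have step : ∀ r r' : ℝ, Real.exp (-a * |τ - r| - a * |τ' - r'| - b * |r - r'|)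
      = Real.exp (-a*|τ-r|) * Real.exp (-a*|τ'-r'| - b*|r-r'|) := fun r r' => by
    rw [← Real.exp_add]; ring_nf
  have key1 : Set.EqOn
      (fun r => (1/(a+b) - 1/(a-b)) * (Real.exp (-(a*τ) - a*τ') * Real.exp ((2*a)*r))
        + (1/(a-b)) * (Real.exp (-(a*τ) - b*τ') * Real.exp ((a+b)*r))) f (Set.Iic τ') := by
    intro r hr
    simp only [Set.mem_Iic] at hr
    simp only [hf, step]
    rw [integral_const_mul, inner_le a b τ' r ha hb hab hr,
      abs_of_nonneg (by linarith : (0:ℝ) ≤ τ - r)]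
    simp only [mul_sub, mul_add, ← mul_div_assoc, ← Real.exp_add]
    ring_nf
  have key2 : Set.EqOn
      (fun r => (1/(a+b)) * (Real.exp (b*τ' - a*τ) * Real.exp ((a-b)*r))) f (Set.Ioc τ' τ) := by
    intro r hr
    simp only [Set.mem_Ioc] at hr
    simp only [hf, step]
    rw [integral_const_mul, inner_ge a b τ' r ha hb hr.1.le,
      abs_of_nonneg (by linarith [hr.2] : (0:ℝ) ≤ τ - r)]
    simp only [mul_sub, mul_add, ← mul_div_assoc, ← Real.exp_add]
    ring_nf
  have hint1 : IntegrableOn f (Set.Iic τ') := by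
    refine IntegrableOn.congr_fun ?_ key1 measurableSet_Iic
    exact (((myIntgOn (2*a) τ' (by linarith)).const_mul _).const_mul _).add
      (((myIntgOn (a+b) τ' (by linarith)).const_mul _).const_mul _)
  have hint2 : IntegrableOn f (Set.Ioc τ' τ) := by
    refine IntegrableOn.congr_fun ?_ key2 measurableSet_Ioc
    apply Continuous.integrableOn_Ioc
    fun_prop
  have hdisj : Disjoint (Set.Iic τ') (Set.Ioc τ' τ) := by
    simp only [Set.disjoint_left, Set.mem_Iic, Set.mem_Ioc]
    intro x hx1 hx2
    linarith [hx2.1]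
  have hsplit : Set.Iic τ = Set.Iic τ' ∪ Set.Ioc τ' τ := (Set.Iic_union_Ioc_eq_Iic h).symm
  rw [show (∫ r in Set.Iic τ, ∫ r' in Set.Iic τ',
        Real.exp (-a * |τ - r| - a * |τ' - r'| - b * |r - r'|)) = ∫ r in Set.Iic τ, f r from rfl,
    hsplit, setIntegral_union hdisj measurableSet_Ioc hint1 hint2,
    ← setIntegral_congr_fun measurableSet_Iic key1,
    ← setIntegral_congr_fun measurableSet_Ioc key2,
    integral_add (((myIntgOn (2*a) τ' (by linarith)).const_mul _).const_mul _)
      (((myIntgOn (a+b) τ' (by linarith)).const_mul _).const_mul _)]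
  simp only [integral_const_mul]
  rw [myIntIic (2*a) τ' (by linarith), myIntIic (a+b) τ' (by linarith),
    ← intervalIntegral.integral_of_le h, myIntInt (a-b) τ' τ h2,
    abs_of_nonneg (by linarith : (0:ℝ) ≤ τ - τ')]
  simp only [mul_sub, mul_add, ← mul_div_assoc, ← Real.exp_add]
  rw [show a*a^2 - a*b^2 = a*(a^2-b^2) by ring, eq_div_iff (mul_ne_zero ha' h3)]
  field_simp
  ring

lemma myMono (a b d : ℝ) (ha : 0 < a) (hab : a ≤ b) (hd : 0 ≤ d) :
    (1 - Real.exp (-(b*d)))/b ≤ (1 - Real.exp (-(a*d)))/a := by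
  have hb : 0 < b := lt_of_lt_of_le ha hab
  have ia : ∫ t in (0:ℝ)..d, Real.exp ((-a)*t) = (1 - Real.exp (-(a*d)))/a := by
    rw [myIntInt (-a) 0 d (by linarith)]
    rw [show (-a)*d = -(a*d) by ring, show (-a)*0 = (0:ℝ) by ring, Real.exp_zero]
    rw [div_eq_div_iff (by linarith) (by linarith : a ≠ 0)]
    ring
  have ib : ∫ t in (0:ℝ)..d, Real.exp ((-b)*t) = (1 - Real.exp (-(b*d)))/b := by
    rw [myIntInt (-b) 0 d (by linarith)]
    rw [show (-b)*d = -(b*d) by ring, show (-b)*0 = (0:ℝ) by ring, Real.exp_zero]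
    rw [div_eq_div_iff (by linarith) (by linarith : b ≠ 0)]
    ring
  rw [← ia, ← ib]
  apply intervalIntegral.integral_mono_on hd
  · exact (Real.continuous_exp.comp (continuous_const.mul continuous_id)).intervalIntegrable 0 d
  · exact (Real.continuous_exp.comp (continuous_const.mul continuous_id)).intervalIntegrable 0 d
  · intro t ht
    apply Real.exp_le_exp.mpr
    rcases ht with ⟨ht0, _⟩
    nlinarith

lemma myBound (a b D : ℝ) (ha : 0 < a) (hb : 0 < b) (hab : a ≠ b) (hD : 0 ≤ D) :
    (a * Real.exp (-b*D) - b * Real.exp (-a*D)) / (a * (a^2 - b^2))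
      ≤ min (1/(a*(a+b))) (Real.exp (-(min a b)*D)/(a*|a-b|)) := by
  have hea := Real.exp_pos (-(a*D))
  have heb := Real.exp_pos (-(b*D))
  have hea1 : Real.exp (-(a*D)) ≤ 1 := Real.exp_le_one_iff.mpr (by nlinarith)
  have heb1 : Real.exp (-(b*D)) ≤ 1 := Real.exp_le_one_iff.mpr (by nlinarith)
  rw [show -b*D = -(b*D) by ring, show -a*D = -(a*D) by ring]
  rcases lt_or_gt_of_ne hab with hlt | hgt
  · -- a < b
    have hmono := myMono a b D ha hlt.le hD
    have hcross : a * (1 - Real.exp (-(b*D))) ≤ b * (1 - Real.exp (-(a*D))) := by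
      rw [div_le_div_iff₀ hb ha] at hmono
      nlinarith
    have hden : (0:ℝ) < a*((b-a)*(a+b)) :=
      mul_pos ha (mul_pos (by linarith) (by linarith))
    have hne : a*(a^2-b^2) ≠ 0 := by
      apply mul_ne_zero ha.ne'
      nlinarith
    have hrw : (a * Real.exp (-(b*D)) - b * Real.exp (-(a*D))) / (a * (a^2 - b^2))
        = (b * Real.exp (-(a*D)) - a * Real.exp (-(b*D))) / (a*((b-a)*(a+b))) := by
      rw [div_eq_div_iff hne hden.ne']
      ring
    rw [hrw, min_eq_left hlt.le, abs_of_neg (by linarith : a - b < 0),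
      show -a*D = -(a*D) by ring]
    apply le_min
    · rw [div_le_div_iff₀ hden (by positivity)]
      nlinarith
    · rw [show a * -(a-b) = a*(b-a) by ring, div_le_div_iff₀ hden (by nlinarith)]
      nlinarith [mul_le_mul_of_nonneg_right
        (show b * Real.exp (-(a*D)) - a * Real.exp (-(b*D)) ≤ (a+b) * Real.exp (-(a*D)) by nlinarith)
        (show (0:ℝ) ≤ a*(b-a) by nlinarith)]
  · -- b < a
    have hmono := myMono b a D hb hgt.le hD
    have hcross : b * (1 - Real.exp (-(a*D))) ≤ a * (1 - Real.exp (-(b*D))) := by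
      rw [div_le_div_iff₀ ha hb] at hmono
      nlinarith
    have hden : (0:ℝ) < a*(a^2-b^2) := by
      have h4 : (0:ℝ) < (a-b)*(a+b) := mul_pos (by linarith) (by linarith)
      nlinarith
    rw [min_eq_right hgt.le, abs_of_pos (by linarith : (0:ℝ) < a - b),
      show -b*D = -(b*D) by ring]
    apply le_min
    · rw [div_le_div_iff₀ hden (by positivity)]
      nlinarith
    · rw [div_le_div_iff₀ hden (mul_pos ha (by linarith : (0:ℝ) < a-b))]
      nlinarith [mul_le_mul_of_nonneg_right
        (show a * Real.exp (-(b*D)) - b * Real.exp (-(a*D)) ≤ (a+b) * Real.exp (-(b*D)) by nlinarith)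
        (show (0:ℝ) ≤ a*(a-b) by nlinarith)]

/-- Explicit evaluation and bound for the double exponential integral. -/
theorem stmt_2 (a b τ τ' : ℝ) (ha : 0 < a) (hb : 0 < b) (hab : a ≠ b) :
    (∫ r in Set.Iic τ, ∫ r' in Set.Iic τ',
        Real.exp (-a * |τ - r| - a * |τ' - r'| - b * |r - r'|))
      = (a * Real.exp (-b * |τ - τ'|) - b * Real.exp (-a * |τ - τ'|)) / (a * (a ^ 2 - b ^ 2)) ∧
    (∫ r in Set.Iic τ, ∫ r' in Set.Iic τ',
        Real.exp (-a * |τ - r| - a * |τ' - r'| - b * |r - r'|))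
      ≤ min (1 / (a * (a + b))) (Real.exp (-(min a b) * |τ - τ'|) / (a * |a - b|)) := by
  have heq : (∫ r in Set.Iic τ, ∫ r' in Set.Iic τ',
        Real.exp (-a * |τ - r| - a * |τ' - r'| - b * |r - r'|))
      = (a * Real.exp (-b * |τ - τ'|) - b * Real.exp (-a * |τ - τ'|)) / (a * (a ^ 2 - b ^ 2)) := by
    rcases le_total τ τ' with h | h
    · exact eval_le a b τ τ' ha hb hab h
    · exact eval_ge a b τ τ' ha hb hab h
  refine ⟨heq, ?_⟩
  rw [heq]
  exact myBound a b |τ - τ'| ha hb hab (abs_nonneg _)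
end

section
/- For a, b, t > 0 with a ≠ b, one has |b·e^{-at} - a·e^{-bt} - (b - a)| ≤ C · min(1, 2ab·t²) · |b - a| for some absolute constant C ≥ 1. -/
/-!
For `a ≤ b` put `F(s) = b e^{-as} - a e^{-bs}`, so that `F(0) = b - a` and
`F'(s) = ab (e^{-bs} - e^{-as}) ≤ 0` on `s ≥ 0`. The defect `D = F(0) - F` is therefore
nonnegative, and `D(t) ≤ b - a` because `F(t) ≥ 0`. Since `s ↦ e^{-s}` is `1`-Lipschitz on
`[0, ∞)`, `D'(s) ≤ ab (b - a) s`, whence `D(t) ≤ ab (b - a) t² / 2`. Both bounds together give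
the claim with `C = 1`; the case `b < a` follows by antisymmetry in `(a, b)`.
-/

open Real Set

noncomputable def expDefect (a b t : ℝ) : ℝ := (b - a) - (b * exp (-a * t) - a * exp (-b * t))

lemma exp_neg_sub_exp_neg_le {x y : ℝ} (hx : 0 ≤ x) (hxy : x ≤ y) :
    exp (-x) - exp (-y) ≤ y - x := by
  have h₁ : exp (-x) ≤ 1 := exp_le_one_iff.mpr (neg_nonpos.mpr hx)
  have h₂ : exp (x - y) ≤ 1 := exp_le_one_iff.mpr (sub_nonpos.mpr hxy)
  have h₃ : x - y + 1 ≤ exp (x - y) := add_one_le_exp _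
  have hsplit : exp (-y) = exp (-x) * exp (x - y) := by rw [← exp_add]; congr 1; ring
  rw [hsplit]
  nlinarith [exp_pos (-x)]

lemma hasDerivAt_expDefect (a b t : ℝ) :
    HasDerivAt (expDefect a b) (a * b * (exp (-a * t) - exp (-b * t))) t := by
  have hexp (c : ℝ) : HasDerivAt (fun s => exp (-c * s)) (-c * exp (-c * t)) t := by
    simpa [mul_comm] using ((hasDerivAt_id t).const_mul (-c)).exp
  exact ((((hexp a).const_mul b).sub ((hexp b).const_mul a)).const_sub (b - a)).congr_deriv
    (by ring)

lemma expDefect_zero (a b : ℝ) : expDefect a b 0 = 0 := by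
  simp [expDefect]

lemma expDefect_swap (a b t : ℝ) : expDefect b a t = -expDefect a b t := by
  unfold expDefect
  ring

section

variable {a b : ℝ} (ha : 0 ≤ a) (hab : a ≤ b)
include ha hab

lemma monotoneOn_expDefect : MonotoneOn (expDefect a b) (Ici 0) := by
  refine monotoneOn_of_hasDerivWithinAt_nonneg (convex_Ici 0)
    (fun t _ => (hasDerivAt_expDefect a b t).continuousAt.continuousWithinAt)
    (fun t _ => (hasDerivAt_expDefect a b t).hasDerivWithinAt) fun t ht => ?_
  rw [interior_Ici] at ht
  have hexp : exp (-b * t) ≤ exp (-a * t) := exp_le_exp.mpr (by nlinarith [mem_Ioi.mp ht])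
  exact mul_nonneg (mul_nonneg ha (ha.trans hab)) (sub_nonneg.mpr hexp)

lemma expDefect_nonneg {t : ℝ} (ht : 0 ≤ t) : 0 ≤ expDefect a b t :=
  expDefect_zero a b ▸ monotoneOn_expDefect ha hab self_mem_Ici ht ht

lemma expDefect_le_sub {t : ℝ} (ht : 0 ≤ t) : expDefect a b t ≤ b - a := by
  have hexp : exp (-b * t) ≤ exp (-a * t) := exp_le_exp.mpr (by nlinarith)
  have : a * exp (-b * t) ≤ b * exp (-a * t) :=
    mul_le_mul hab hexp (exp_pos _).le (ha.trans hab)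
  unfold expDefect
  linarith

lemma expDefect_le_mul_sq {t : ℝ} (ht : 0 ≤ t) :
    expDefect a b t ≤ a * b * (b - a) * t ^ 2 / 2 := by
  let G : ℝ → ℝ := fun s => a * b * (b - a) * s ^ 2 / 2 - expDefect a b s
  have hG (s : ℝ) : HasDerivAt G
      (a * b * ((b - a) * s - (exp (-a * s) - exp (-b * s)))) s := by
    exact (((hasDerivAt_pow 2 s).const_mul (a * b * (b - a))).div_const 2
      |>.sub (hasDerivAt_expDefect a b s)).congr_deriv (by ring)
  have hmono : MonotoneOn G (Ici 0) := by
    refine monotoneOn_of_hasDerivWithinAt_nonneg (convex_Ici 0)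
      (fun s _ => (hG s).continuousAt.continuousWithinAt)
      (fun s _ => (hG s).hasDerivWithinAt) fun s hs => ?_
    rw [interior_Ici] at hs
    have hs : 0 ≤ s := le_of_lt hs
    have := exp_neg_sub_exp_neg_le (mul_nonneg ha hs) (mul_le_mul_of_nonneg_right hab hs)
    refine mul_nonneg (mul_nonneg ha (ha.trans hab)) ?_
    simp only [neg_mul]
    nlinarith
  have := hmono self_mem_Ici ht ht
  simp only [G, expDefect_zero] at this
  linarith

end

lemma abs_expDefect_le {a b t : ℝ} (ha : 0 ≤ a) (hb : 0 ≤ b) (ht : 0 ≤ t) :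
    |expDefect a b t| ≤ min 1 (2 * a * b * t ^ 2) * |b - a| := by
  wlog hab : a ≤ b generalizing a b
  · rw [← abs_neg, ← expDefect_swap, abs_sub_comm, mul_right_comm 2 a b]
    exact this hb ha (le_of_not_ge hab)
  rw [abs_of_nonneg (expDefect_nonneg ha hab ht), abs_of_nonneg (sub_nonneg.mpr hab)]
  rcases le_total 1 (2 * a * b * t ^ 2) with h | h
  · rw [min_eq_left h, one_mul]
    exact expDefect_le_sub ha hab ht
  · rw [min_eq_right h]
    have : 0 ≤ a * b * (b - a) * t ^ 2 :=
      mul_nonneg (mul_nonneg (mul_nonneg ha hb) (sub_nonneg.mpr hab)) (sq_nonneg t)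
    linarith [expDefect_le_mul_sq ha hab ht]

/-- |b e^{-at} - a e^{-bt} - (b-a)| ≤ C · min(1, 2abt²) · |b-a| for an absolute C ≥ 1. -/
theorem stmt_4 :
    ∃ C : ℝ, 1 ≤ C ∧ ∀ a b t : ℝ, 0 < a → 0 < b → 0 < t → a ≠ b →
      |b * Real.exp (-a * t) - a * Real.exp (-b * t) - (b - a)|
        ≤ C * min 1 (2 * a * b * t ^ 2) * |b - a| := by
  refine ⟨1, le_rfl, fun a b t ha hb ht _ => ?_⟩
  have hdefect : b * exp (-a * t) - a * exp (-b * t) - (b - a) = -expDefect a b t := by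
    unfold expDefect
    ring
  rw [hdefect, abs_neg, one_mul]
  exact abs_expDefect_le ha.le hb.le ht.le
end

section
/- (Fractional Gronwall inequality) Let a, M > 0 and T > 0. If g : [0,T] → ℝ is nonnegative and continuous, f : [0,T] → ℝ is nonnegative, and g(t) ≤ f(t) + M·∫_0^t (t-s)^{a-1} g(s) ds for all t ∈ [0,T], and f is nondecreasing, then g(t) ≤ f(t)·E_a(Γ(a)·M·t^a) for all t ∈ [0,T], where E_a(z) = ∑_{j≥0} z^j/Γ(ja+1) is the Mittag-Leffler function. -/
/-!
Fix `t₀` and put `F = f t₀`, `V φ t = M ∫₀ᵗ (t - s)^(a-1) φ s ds` and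
`u_j t = (Γ(a) M t^a)^j / Γ(ja + 1)`. The Beta integral gives `V u_j = u_(j+1)`, and `V` is
monotone, so iterating `g ≤ F + V g` on `[0, t₀]`, starting from a bound `g ≤ C`, yields
`g ≤ F (u_0 + ⋯ + u_(n-1)) + C u_n`. The Mittag-Leffler series converges by the ratio test
(log-convexity of `Γ` gives `Γ(x + 1) x^a ≤ Γ(x + 1 + a)`), so `C u_n t₀ → 0`.
-/

open MeasureTheory

open Set Filter Finset Topology

noncomputable def mittagLefflerTerm (a z : ℝ) (j : ℕ) : ℝ := z ^ j / Real.Gamma (j * a + 1)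

noncomputable def mittagLeffler (a z : ℝ) : ℝ := ∑' j : ℕ, mittagLefflerTerm a z j

@[simp]
theorem mittagLefflerTerm_zero (a z : ℝ) : mittagLefflerTerm a z 0 = 1 := by
  simp [mittagLefflerTerm]

theorem continuous_mittagLefflerTerm_mul_rpow {a : ℝ} (ha : 0 ≤ a) (c : ℝ) (j : ℕ) :
    Continuous fun s => mittagLefflerTerm a (c * s ^ a) j :=
  ((continuous_const.mul (Real.continuous_rpow_const ha)).pow j).div_const _

theorem Gamma_add_one_mul_rpow_le {x a : ℝ} (hx : 0 < x) (ha : 0 < a) :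
    Real.Gamma (x + 1) * x ^ a ≤ Real.Gamma (x + 1 + a) := by
  have hslope := Real.convexOn_log_Gamma.slope_mono_adjacent (x := x) (y := x + 1) (z := x + 1 + a)
    hx (mem_Ioi.2 (by linarith)) (by linarith) (by linarith)
  have hstep : Real.log (Real.Gamma (x + 1)) - Real.log (Real.Gamma x) = Real.log x := by
    rw [Real.Gamma_add_one hx.ne', Real.log_mul hx.ne' (Real.Gamma_pos_of_pos hx).ne']
    ring
  simp only [Function.comp_apply, hstep, add_sub_cancel_left, div_one,
    le_div_iff₀ ha] at hslope
  have hΓ := Real.Gamma_pos_of_pos (show 0 < x + 1 by linarith)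
  rw [← Real.log_le_log_iff (by positivity) (Real.Gamma_pos_of_pos (by linarith)),
    Real.log_mul hΓ.ne' (by positivity), Real.log_rpow hx]
  linarith

theorem summable_mittagLefflerTerm {a : ℝ} (ha : 0 < a) (z : ℝ) :
    Summable (mittagLefflerTerm a z) := by
  have hgrowth : ∀ᶠ n : ℕ in atTop, 2 * |z| ≤ ((n : ℝ) * a) ^ a :=
    ((tendsto_rpow_atTop ha).comp
      (tendsto_natCast_atTop_atTop.atTop_mul_const ha)).eventually_ge_atTop _
  refine summable_of_ratio_norm_eventually_le (r := 1 / 2) (by norm_num) ?_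
  filter_upwards [hgrowth, eventually_gt_atTop 0] with n hn hn0
  have hna : 0 < (n : ℝ) * a := by positivity
  have hΓ := Real.Gamma_pos_of_pos (show 0 < (n : ℝ) * a + 1 by linarith)
  have hΓ' := Real.Gamma_pos_of_pos (show 0 < (n : ℝ) * a + 1 + a by linarith)
  have hratio :
      |z| / Real.Gamma ((n : ℝ) * a + 1 + a) ≤ 1 / 2 / Real.Gamma ((n : ℝ) * a + 1) := by
    rw [div_le_div_iff₀ hΓ' hΓ]
    nlinarith [Gamma_add_one_mul_rpow_le hna ha]
  simp only [mittagLefflerTerm, norm_div, norm_pow, Real.norm_eq_abs, Nat.cast_succ, add_mul,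
    one_mul, add_right_comm _ a, abs_of_pos hΓ, abs_of_pos hΓ']
  calc |z| ^ (n + 1) / Real.Gamma ((n : ℝ) * a + 1 + a)
      = |z| ^ n * (|z| / Real.Gamma ((n : ℝ) * a + 1 + a)) := by ring
    _ ≤ |z| ^ n * (1 / 2 / Real.Gamma ((n : ℝ) * a + 1)) := by gcongr
    _ = 1 / 2 * (|z| ^ n / Real.Gamma ((n : ℝ) * a + 1)) := by ring

theorem integral_sub_rpow_mul_rpow {a b t : ℝ} (ha : 0 < a) (hb : -1 < b) (ht : 0 < t) :
    ∫ s in 0..t, (t - s) ^ (a - 1) * s ^ b =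
      Real.Gamma a * Real.Gamma (b + 1) / Real.Gamma (a + b + 1) * t ^ (a + b) := by
  have hβ := Complex.betaIntegral_scaled (b + 1) a ht
  have hb' : 0 < ((b : ℂ) + 1).re := by
    simp only [Complex.add_re, Complex.ofReal_re, Complex.one_re]
    linarith
  rw [Complex.betaIntegral_eq_Gamma_mul_div _ _ hb' (by simpa)] at hβ
  apply Complex.ofReal_injective
  rw [← intervalIntegral.integral_ofReal]
  convert hβ using 1
  · refine intervalIntegral.integral_congr fun s hs => ?_
    rw [uIcc_of_le ht.le] at hs
    push_cast
    rw [Complex.ofReal_cpow (sub_nonneg.2 hs.2), Complex.ofReal_cpow hs.1, add_sub_cancel_right]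
    push_cast
    ring
  · rw [show (b : ℂ) + 1 + a - 1 = ((a + b : ℝ) : ℂ) by push_cast; ring,
      show (b : ℂ) + 1 + a = ((a + b + 1 : ℝ) : ℂ) by push_cast; ring,
      show (b : ℂ) + 1 = ((b + 1 : ℝ) : ℂ) by push_cast; ring]
    simp only [Complex.Gamma_ofReal, ← Complex.ofReal_cpow ht.le]
    push_cast
    ring

/-- `Γ a` times the Riemann–Liouville fractional integral of order `a`. -/
noncomputable def abelIntegral (a : ℝ) (φ : ℝ → ℝ) (t : ℝ) : ℝ :=
  ∫ s in 0..t, (t - s) ^ (a - 1) * φ s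

section AbelIntegral

variable {a : ℝ}

theorem intervalIntegrable_abelKernel_mul (ha : 0 < a) {φ : ℝ → ℝ} {t : ℝ}
    (hφ : ContinuousOn φ (uIcc 0 t)) :
    IntervalIntegrable (fun s => (t - s) ^ (a - 1) * φ s) volume 0 t := by
  have hkernel : IntervalIntegrable (fun s => (t - s) ^ (a - 1)) volume 0 t := by
    simpa using ((intervalIntegral.intervalIntegrable_rpow' (a := 0) (b := t)
      (show -1 < a - 1 by linarith)).comp_sub_left t).symm
  exact hkernel.mul_continuousOn hφ

theorem abelIntegral_mono (ha : 0 < a) {φ ψ : ℝ → ℝ} {t : ℝ} (ht : 0 ≤ t)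
    (hφ : ContinuousOn φ (Icc 0 t)) (hψ : ContinuousOn ψ (Icc 0 t))
    (h : ∀ s ∈ Icc 0 t, φ s ≤ ψ s) : abelIntegral a φ t ≤ abelIntegral a ψ t := by
  rw [← uIcc_of_le ht] at hφ hψ
  refine intervalIntegral.integral_mono_on ht (intervalIntegrable_abelKernel_mul ha hφ)
    (intervalIntegrable_abelKernel_mul ha hψ) fun s hs => ?_
  exact mul_le_mul_of_nonneg_left (h s hs) (Real.rpow_nonneg (sub_nonneg.2 hs.2) _)

theorem abelIntegral_add (ha : 0 < a) {φ ψ : ℝ → ℝ} {t : ℝ}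
    (hφ : ContinuousOn φ (uIcc 0 t)) (hψ : ContinuousOn ψ (uIcc 0 t)) :
    abelIntegral a (fun s => φ s + ψ s) t = abelIntegral a φ t + abelIntegral a ψ t := by
  simp only [abelIntegral, mul_add]
  exact intervalIntegral.integral_add (intervalIntegrable_abelKernel_mul ha hφ)
    (intervalIntegrable_abelKernel_mul ha hψ)

theorem abelIntegral_const_mul (c : ℝ) (φ : ℝ → ℝ) (t : ℝ) :
    abelIntegral a (fun s => c * φ s) t = c * abelIntegral a φ t := by
  simp only [abelIntegral, mul_left_comm _ c]
  exact intervalIntegral.integral_const_mul c _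

theorem abelIntegral_finset_sum (ha : 0 < a) {ι : Type*} (I : Finset ι) {φ : ι → ℝ → ℝ}
    {t : ℝ} (hφ : ∀ i ∈ I, ContinuousOn (φ i) (uIcc 0 t)) :
    abelIntegral a (fun s => ∑ i ∈ I, φ i s) t = ∑ i ∈ I, abelIntegral a (φ i) t := by
  simp only [abelIntegral, Finset.mul_sum]
  exact intervalIntegral.integral_finsetSum fun i hi =>
    intervalIntegrable_abelKernel_mul ha (hφ i hi)

theorem mul_abelIntegral_mittagLefflerTerm (ha : 0 < a) (M : ℝ) {t : ℝ} (ht : 0 ≤ t)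
    (j : ℕ) :
    M * abelIntegral a (fun s => mittagLefflerTerm a (Real.Gamma a * M * s ^ a) j) t =
      mittagLefflerTerm a (Real.Gamma a * M * t ^ a) (j + 1) := by
  rcases ht.eq_or_lt with rfl | ht
  · simp [abelIntegral, mittagLefflerTerm, Real.zero_rpow ha.ne']
  have hpow : ∀ s : ℝ, 0 ≤ s → ∀ k : ℕ, (s ^ a) ^ k = s ^ (k * a : ℝ) := fun s hs k => by
    rw [mul_comm, Real.rpow_mul hs, Real.rpow_natCast]
  have hterm : EqOn (fun s => (t - s) ^ (a - 1) * mittagLefflerTerm a (Real.Gamma a * M * s ^ a) j)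
      (fun s => (Real.Gamma a * M) ^ j / Real.Gamma (j * a + 1) *
        ((t - s) ^ (a - 1) * s ^ ((j : ℝ) * a))) (uIcc 0 t) := fun s hs => by
    rw [uIcc_of_le ht.le] at hs
    simp only [mittagLefflerTerm, mul_pow, hpow s hs.1]
    ring
  have hΓ := Real.Gamma_pos_of_pos (show 0 < (j : ℝ) * a + 1 by positivity)
  rw [abelIntegral, intervalIntegral.integral_congr hterm, intervalIntegral.integral_const_mul]
  rw [integral_sub_rpow_mul_rpow ha (by linarith [show 0 ≤ (j : ℝ) * a by positivity]) ht]
  simp only [mittagLefflerTerm, mul_pow, hpow t ht.le]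
  rw [show ((j + 1 : ℕ) : ℝ) * a = a + j * a by push_cast; ring]
  field_simp
  ring

end AbelIntegral

section Gronwall

variable {a M : ℝ} {g : ℝ → ℝ} {t₀ F : ℝ}

theorem le_mittagLeffler_partialSum (ha : 0 < a) (hM : 0 ≤ M) {C : ℝ}
    (hg : ContinuousOn g (Icc 0 t₀)) (hgC : ∀ s ∈ Icc 0 t₀, g s ≤ C)
    (hineq : ∀ t ∈ Icc 0 t₀, g t ≤ F + M * abelIntegral a g t) (n : ℕ) :
    ∀ t ∈ Icc 0 t₀,
      g t ≤ F * ∑ j ∈ range n, mittagLefflerTerm a (Real.Gamma a * M * t ^ a) j +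
        C * mittagLefflerTerm a (Real.Gamma a * M * t ^ a) n := by
  induction n with
  | zero => simpa using hgC
  | succ n ih =>
    intro t ht
    have hsub : Icc 0 t ⊆ Icc 0 t₀ := Icc_subset_Icc_right ht.2
    have hterm (j : ℕ) := continuous_mittagLefflerTerm_mul_rpow ha.le (Real.Gamma a * M) j
    have hsum : Continuous fun s => F * ∑ j ∈ range n,
        mittagLefflerTerm a (Real.Gamma a * M * s ^ a) j :=
      continuous_const.mul (continuous_finsetSum _ fun j _ => hterm j)
    have hrem : Continuous fun s => C * mittagLefflerTerm a (Real.Gamma a * M * s ^ a) n :=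
      continuous_const.mul (hterm n)
    calc g t ≤ F + M * abelIntegral a g t := hineq t ht
      _ ≤ F + M * abelIntegral a (fun s => F * ∑ j ∈ range n,
            mittagLefflerTerm a (Real.Gamma a * M * s ^ a) j +
            C * mittagLefflerTerm a (Real.Gamma a * M * s ^ a) n) t := by
        gcongr
        exact abelIntegral_mono ha ht.1 (hg.mono hsub) (hsum.add hrem).continuousOn
          fun s hs => ih s (hsub hs)
      _ = F + (F * ∑ j ∈ range n, mittagLefflerTerm a (Real.Gamma a * M * t ^ a) (j + 1) +
            C * mittagLefflerTerm a (Real.Gamma a * M * t ^ a) (n + 1)) := by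
        rw [abelIntegral_add ha hsum.continuousOn hrem.continuousOn, abelIntegral_const_mul,
          abelIntegral_const_mul, abelIntegral_finset_sum ha _ fun j _ => (hterm j).continuousOn,
          mul_add, mul_left_comm, mul_sum, mul_left_comm M C]
        simp only [mul_abelIntegral_mittagLefflerTerm ha M ht.1]
      _ = _ := by
        rw [sum_range_succ' _ n, mittagLefflerTerm_zero]
        ring

theorem le_mul_mittagLeffler (ha : 0 < a) (hM : 0 ≤ M) (ht₀ : 0 ≤ t₀)
    (hg : ContinuousOn g (Icc 0 t₀))
    (hineq : ∀ t ∈ Icc 0 t₀, g t ≤ F + M * abelIntegral a g t) :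
    g t₀ ≤ F * mittagLeffler a (Real.Gamma a * M * t₀ ^ a) := by
  obtain ⟨C, hC⟩ := isCompact_Icc.bddAbove_image hg
  set z := Real.Gamma a * M * t₀ ^ a
  have hz := summable_mittagLefflerTerm ha z
  have hlim : Tendsto (fun n => F * ∑ j ∈ range n, mittagLefflerTerm a z j +
      C * mittagLefflerTerm a z n) atTop (𝓝 (F * mittagLeffler a z + C * 0)) :=
    (hz.hasSum.tendsto_sum_nat.const_mul F).add (hz.tendsto_atTop_zero.const_mul C)
  simpa using ge_of_tendsto' hlim fun n => le_mittagLeffler_partialSum ha hM hg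
    (fun s hs => hC (mem_image_of_mem g hs)) hineq n t₀ ⟨ht₀, le_rfl⟩

end Gronwall

theorem stmt_8_general (a M T : ℝ) (ha : 0 < a) (hM : 0 < M)
    (g f : ℝ → ℝ)
    (hg_cont : ContinuousOn g (Set.Icc 0 T))
    (hf_mono : MonotoneOn f (Set.Icc 0 T))
    (hineq : ∀ t ∈ Set.Icc (0:ℝ) T,
      g t ≤ f t + M * ∫ s in (0:ℝ)..t, (t - s) ^ (a - 1) * g s) :
    ∀ t ∈ Set.Icc (0:ℝ) T,
      g t ≤ f t * ∑' j : ℕ,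
        (Real.Gamma a * M * t ^ a) ^ j / Real.Gamma ((j : ℝ) * a + 1) := by
  intro t ht
  have hsub : Icc 0 t ⊆ Icc 0 T := Icc_subset_Icc_right ht.2
  refine le_mul_mittagLeffler ha hM.le ht.1 (hg_cont.mono hsub) fun s hs => ?_
  exact (hineq s (hsub hs)).trans (add_le_add_left (hf_mono (hsub hs) ht hs.2) _)

/-- Fractional Gronwall inequality with Mittag-Leffler bound. -/
theorem stmt_8 (a M T : ℝ) (ha : 0 < a) (hM : 0 < M) (hT : 0 < T)
    (g f : ℝ → ℝ)
    (hg_cont : ContinuousOn g (Set.Icc 0 T))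
    (hg_nn : ∀ t ∈ Set.Icc (0:ℝ) T, 0 ≤ g t)
    (hf_nn : ∀ t ∈ Set.Icc (0:ℝ) T, 0 ≤ f t)
    (hf_mono : MonotoneOn f (Set.Icc 0 T))
    (hineq : ∀ t ∈ Set.Icc (0:ℝ) T,
      g t ≤ f t + M * ∫ s in (0:ℝ)..t, (t - s) ^ (a - 1) * g s) :
    ∀ t ∈ Set.Icc (0:ℝ) T,
      g t ≤ f t * ∑' j : ℕ,
        (Real.Gamma a * M * t ^ a) ^ j / Real.Gamma ((j : ℝ) * a + 1) :=
  stmt_8_general a M T ha hM g f hg_cont hf_mono hineq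
end

section
/- Let γ > 3/2. Then the double series ∑_{k∈ℤ\{0}} ∑_{j∈ℤ\{0}} |k|^{4-2γ+2a} / (|k|^γ · (|k|^γ + |j|^γ + |k-j|^γ)) converges for all sufficiently small a > 0. In particular it is bounded by a constant times ∑_{k≠0} |k|^{4 - (10/3)γ + 2a}, which is finite when 4 - (10/3)γ + 2a < -1. -/
/-!
Weighted AM-GM gives `|k|^{γ/3} |j|^{2γ/3} ≤ |k|^γ + |j|^γ + |k-j|^γ`, so the `(k, j)` term is at most
`|k|^{ν - 4γ/3} · |j|^{-2γ/3}`. The double series is therefore dominated by a product of two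
single series over `ℤ \ {0}`; the one in `j` converges because `2γ/3 > 1`, and for
`ν = 4 - 2γ + 2a` the one in `k` has exponent `4 - (10/3)γ + 2a`, which is `< -1` once `a` is small.
-/

noncomputable section

def puncturedRpow (s : ℝ) (k : ℤ) : ℝ := if k = 0 then 0 else |(k : ℝ)| ^ s

def doubleSeriesTerm (γ ν : ℝ) (p : ℤ × ℤ) : ℝ :=
  if p.1 = 0 ∨ p.2 = 0 then 0
  else |(p.1 : ℝ)| ^ ν /
    (|(p.1 : ℝ)| ^ γ * (|(p.1 : ℝ)| ^ γ + |(p.2 : ℝ)| ^ γ + |((p.1 : ℝ) - (p.2 : ℝ))| ^ γ))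

lemma puncturedRpow_nonneg (s : ℝ) (k : ℤ) : 0 ≤ puncturedRpow s k := by
  unfold puncturedRpow
  split <;> positivity

lemma summable_puncturedRpow {s : ℝ} (hs : s < -1) : Summable (puncturedRpow s) := by
  refine (Real.summable_abs_int_rpow (b := -s) (by linarith)).congr fun k => ?_
  rw [neg_neg, puncturedRpow]
  split_ifs with hk
  · simp [hk, Real.zero_rpow (by linarith : s ≠ 0)]
  · rfl

lemma tsum_puncturedRpow_pos {s : ℝ} (hs : s < -1) : 0 < ∑' k, puncturedRpow s k :=
  (summable_puncturedRpow hs).tsum_pos (puncturedRpow_nonneg s) 1 (by simp [puncturedRpow])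

lemma doubleSeriesTerm_nonneg (γ ν : ℝ) (p : ℤ × ℤ) : 0 ≤ doubleSeriesTerm γ ν p := by
  unfold doubleSeriesTerm
  split <;> positivity

lemma rpow_div_three_mul_rpow_le_add (γ : ℝ) {x y z : ℝ} (hx : 0 ≤ x) (hy : 0 ≤ y) (hz : 0 ≤ z) :
    x ^ (γ / 3) * y ^ (2 * γ / 3) ≤ x ^ γ + y ^ γ + z ^ γ := by
  have amgm := Real.geom_mean_le_arith_mean2_weighted (w₁ := 1 / 3) (w₂ := 2 / 3)
    (by norm_num) (by norm_num) (Real.rpow_nonneg hx γ) (Real.rpow_nonneg hy γ) (by norm_num)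
  rw [← Real.rpow_mul hx, ← Real.rpow_mul hy] at amgm
  have := Real.rpow_nonneg hx γ
  have := Real.rpow_nonneg hy γ
  have := Real.rpow_nonneg hz γ
  calc x ^ (γ / 3) * y ^ (2 * γ / 3) = x ^ (γ * (1 / 3)) * y ^ (γ * (2 / 3)) := by ring_nf
    _ ≤ x ^ γ + y ^ γ + z ^ γ := by linarith

lemma doubleSeriesTerm_le (γ ν : ℝ) (p : ℤ × ℤ) :
    doubleSeriesTerm γ ν p ≤ puncturedRpow (ν - 4 * γ / 3) p.1 * puncturedRpow (-(2 * γ / 3)) p.2 := by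
  obtain ⟨k, j⟩ := p
  unfold doubleSeriesTerm puncturedRpow
  by_cases hkj : k = 0 ∨ j = 0
  · rw [if_pos hkj]
    split_ifs <;> positivity
  obtain ⟨hk, hj⟩ := not_or.mp hkj
  simp only [if_neg hkj, if_neg hk, if_neg hj]
  have hK : 0 < |(k : ℝ)| := abs_pos.mpr (Int.cast_ne_zero.mpr hk)
  have hJ : 0 < |(j : ℝ)| := abs_pos.mpr (Int.cast_ne_zero.mpr hj)
  have hdenom := rpow_div_three_mul_rpow_le_add γ hK.le hJ.le (abs_nonneg ((k : ℝ) - j))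
  calc |(k : ℝ)| ^ ν / (|(k : ℝ)| ^ γ * (|(k : ℝ)| ^ γ + |(j : ℝ)| ^ γ + |(k : ℝ) - j| ^ γ))
      ≤ |(k : ℝ)| ^ ν / (|(k : ℝ)| ^ γ * (|(k : ℝ)| ^ (γ / 3) * |(j : ℝ)| ^ (2 * γ / 3))) := by
        gcongr
    _ = |(k : ℝ)| ^ (ν - 4 * γ / 3) * |(j : ℝ)| ^ (-(2 * γ / 3)) := by
        rw [Real.rpow_neg hJ.le, show ν - 4 * γ / 3 = ν - γ - γ / 3 by ring,
          Real.rpow_sub hK, Real.rpow_sub hK]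
        field_simp

section

variable {γ ν : ℝ} (hγ : 3 / 2 < γ) (hν : ν - 4 * γ / 3 < -1)
include hγ hν

lemma summable_puncturedRpow_mul_puncturedRpow :
    Summable fun p : ℤ × ℤ => puncturedRpow (ν - 4 * γ / 3) p.1 * puncturedRpow (-(2 * γ / 3)) p.2 :=
  (summable_puncturedRpow hν).mul_of_nonneg (summable_puncturedRpow (by linarith))
    (puncturedRpow_nonneg _) (puncturedRpow_nonneg _)

lemma summable_doubleSeriesTerm : Summable (doubleSeriesTerm γ ν) :=
  .of_nonneg_of_le (doubleSeriesTerm_nonneg γ ν) (doubleSeriesTerm_le γ ν)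
    (summable_puncturedRpow_mul_puncturedRpow hγ hν)

lemma tsum_doubleSeriesTerm_le :
    ∑' p, doubleSeriesTerm γ ν p ≤
      (∑' j, puncturedRpow (-(2 * γ / 3)) j) * ∑' k, puncturedRpow (ν - 4 * γ / 3) k := by
  rw [mul_comm, Summable.tsum_mul_tsum (summable_puncturedRpow hν)
    (summable_puncturedRpow (by linarith)) (summable_puncturedRpow_mul_puncturedRpow hγ hν)]
  exact (summable_doubleSeriesTerm hγ hν).tsum_le_tsum (doubleSeriesTerm_le γ ν)
    (summable_puncturedRpow_mul_puncturedRpow hγ hν)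

end

end

/-- Convergence of the double series for γ > 3/2 and small a > 0, with the single-series bound. -/
theorem stmt_17 (γ : ℝ) (hγ : 3 / 2 < γ) :
    ∃ a₀ : ℝ, 0 < a₀ ∧ ∀ a : ℝ, 0 < a → a < a₀ →
      Summable (fun p : ℤ × ℤ =>
        if p.1 = 0 ∨ p.2 = 0 then 0
        else |(p.1 : ℝ)| ^ (4 - 2 * γ + 2 * a) /
          (|(p.1 : ℝ)| ^ γ * (|(p.1 : ℝ)| ^ γ + |(p.2 : ℝ)| ^ γ + |((p.1 : ℝ) - (p.2 : ℝ))| ^ γ))) ∧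
      (4 - (10 / 3) * γ + 2 * a < -1 →
        Summable (fun k : ℤ => if k = 0 then 0 else |(k : ℝ)| ^ (4 - (10 / 3) * γ + 2 * a)) ∧
        ∃ C : ℝ, 0 < C ∧
          (∑' p : ℤ × ℤ,
            if p.1 = 0 ∨ p.2 = 0 then 0
            else |(p.1 : ℝ)| ^ (4 - 2 * γ + 2 * a) /
              (|(p.1 : ℝ)| ^ γ * (|(p.1 : ℝ)| ^ γ + |(p.2 : ℝ)| ^ γ + |((p.1 : ℝ) - (p.2 : ℝ))| ^ γ)))
            ≤ C * ∑' k : ℤ, if k = 0 then 0 else |(k : ℝ)| ^ (4 - (10 / 3) * γ + 2 * a)) := by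
  refine ⟨(10 / 3 * γ - 5) / 2, by linarith, fun a _ ha => ?_⟩
  have hexp : 4 - (10 / 3) * γ + 2 * a = (4 - 2 * γ + 2 * a) - 4 * γ / 3 := by ring
  have hν : (4 - 2 * γ + 2 * a) - 4 * γ / 3 < -1 := by linarith
  rw [hexp]
  refine ⟨summable_doubleSeriesTerm hγ hν, fun _ => ⟨summable_puncturedRpow hν, _,
    tsum_puncturedRpow_pos (by linarith), tsum_doubleSeriesTerm_le hγ hν⟩⟩
end
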